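/- arXiv:1711.02758 — 6 statements merged into one kernel-verified Lean document; each statement's English description precedes it below -/
import Mathlib

section
/- Let k ≥ 2 be a natural number and let a₀₁, a₀₂, a₁₁, a₁₂, b₁₁, b₁₂ be nonnegative reals; set a₀ = a₀₁ + a₀₂, a₁ = a₁₁ + a₁₂, b₁ = b₁₁ + b₁₂. Let (Πₙ)_{n≥0} be a nonnegative real sequence with Σ_{n≥0} Πₙ = 1 satisfying the balance equations: Π₀·a₀ = Π₁·b₁₂ + Π_k·b₁₁; Π₁·(a₁ + b₁₂) = Π₀·a₀₂ + Π₂·b₁₂ + Π_{k+1}·b₁₁; Πₙ·(a₁ + b₁₂) = Π_{n−1}·a₁₂ + Π_{n+1}·b₁₂ + Π_{n+k}·b₁₁ for all 2 ≤ n ≤ k−1; Π_k·(a₁ + b₁) = Π₀·a₀₁ + Π_{k−1}·a₁₂ + Π_{k+1}·b₁₂ + Π_{2k}·b₁₁; and Πₙ·(a₁ + b₁) = Π_{n−k}·a₁₁ + Π_{n−1}·a₁₂ + Π_{n+1}·b₁₂ + Π_{n+k}·b₁₁ for all n > k. Then Π₀·(b₁₂ + k·b₁₁ − a₁₂ − k·a₁₁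 + a₀₂ + k·a₀₁) = (b₁₂ + k·b₁₁ − a₁₂ − k·a₁₁) − k·b₁₁·Σ_{n=1}^{k−1} Πₙ. -/
/-!
Level-crossing argument. Adding the balance equations of the states `0, …, N` shows that across
the cut between levels `N` and `N + 1` the probability flow upwards equals the flow downwards.
Summing these cut identities over all `N` counts every transition once per level it crosses, i.e.
once for a one-unit jump and `k` times for a `k`-unit jump, so both total flows are finite
combinations of `Π₀`, `∑_{n<k} Πₙ` and the total mass `1`; no moment of `Π` has to be finite.
-/

open Finset

section HasSumWindows

variable {G : Type*} [AddCommGroup G] [TopologicalSpace G] [IsTopologicalAddGroup G]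
  {f : ℕ → G} {a : G}

theorem HasSum.indicator_Ici (hf : HasSum f a) (m : ℕ) :
    HasSum ((Set.Ici m).indicator f) (a - ∑ i ∈ range m, f i) := by
  refine (hasSum_nat_add_iff' m).mp ?_
  have hlow : ∑ i ∈ range m, (Set.Ici m).indicator f i = 0 :=
    sum_eq_zero fun i hi => Set.indicator_of_notMem (by simpa using hi) f
  simpa [hlow, Set.indicator_of_mem] using (hasSum_nat_add_iff' m).mpr hf

theorem HasSum.comp_sub_of_map_zero (hf : HasSum f a) (h0 : f 0 = 0) (j : ℕ) :
    HasSum (fun n => f (n - j)) a := by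
  refine (hasSum_nat_add_iff' j).mp ?_
  have hlow : ∑ i ∈ range j, f (i - j) = 0 :=
    sum_eq_zero fun i hi => by rw [Nat.sub_eq_zero_of_le (mem_range.mp hi).le, h0]
  simpa [hlow] using hf

theorem HasSum.comp_add_of_eq_zero (hf : HasSum f a) {m : ℕ} (hlow : ∀ i < m, f i = 0) :
    HasSum (fun n => f (n + m)) a := by
  simpa [sum_eq_zero fun i hi => hlow i (mem_range.mp hi)] using (hasSum_nat_add_iff' m).mpr hf

theorem HasSum.sum_range_comp_sub (hf : HasSum f a) (h0 : f 0 = 0) (k : ℕ) :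
    HasSum (fun n => ∑ j ∈ range k, f (n - j)) (k • a) := by
  simpa using hasSum_sum (s := range k) fun j _ => hf.comp_sub_of_map_zero h0 j

theorem HasSum.sum_range_comp_add (hf : HasSum f a) {k : ℕ} (hlow : ∀ i < k, f i = 0) :
    HasSum (fun n => ∑ j ∈ range k, f (n + 1 + j)) (k • a) := by
  simpa [add_assoc] using hasSum_sum (s := range k) fun j hj =>
    hf.comp_add_of_eq_zero (m := 1 + j) fun i hi => hlow i (by rw [mem_range] at hj; omega)

end HasSumWindows

section SlidingWindows

variable {G : Type*} [AddCommGroup G] (f : ℕ → G)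

theorem sum_range_comp_succ_sub {k : ℕ} (hk : 0 < k) (n : ℕ) :
    ∑ j ∈ range k, f (n + 1 - j)
      = f (n + 1) + ∑ j ∈ range k, f (n - j) - f (n + 1 - k) := by
  obtain ⟨m, rfl⟩ : ∃ m, k = m + 1 := ⟨k - 1, by omega⟩
  rw [sum_range_succ', sum_range_succ]
  simp only [Nat.add_sub_add_right, Nat.sub_zero]
  abel

theorem sum_range_comp_succ_add (k n : ℕ) :
    ∑ j ∈ range k, f (n + 1 + 1 + j)
      = ∑ j ∈ range k, f (n + 1 + j) - f (n + 1) + f (n + 1 + k) := by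
  cases k with
  | zero => simp
  | succ m =>
    rw [sum_range_succ, sum_range_succ']
    simp only [add_assoc, add_comm 1, add_zero]
    abel

end SlidingWindows

section BalanceEquations

variable {k : ℕ} {a01 a02 a11 a12 b11 b12 : ℝ} {p : ℕ → ℝ}

theorem balance_of_pos (hk : 2 ≤ k)
    (bal1 : p 1 * ((a11 + a12) + b12) = p 0 * a02 + p 2 * b12 + p (k + 1) * b11)
    (balmid : ∀ n, 2 ≤ n → n ≤ k - 1 →
        p n * ((a11 + a12) + b12) = p (n - 1) * a12 + p (n + 1) * b12 + p (n + k) * b11)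
    (balk : p k * ((a11 + a12) + (b11 + b12))
        = p 0 * a01 + p (k - 1) * a12 + p (k + 1) * b12 + p (2 * k) * b11)
    (baln : ∀ n, k < n → p n * ((a11 + a12) + (b11 + b12))
        = p (n - k) * a11 + p (n - 1) * a12 + p (n + 1) * b12 + p (n + k) * b11)
    {n : ℕ} (hn : 1 ≤ n) :
    p n * (a11 + a12 + b12) + b11 * (Set.Ici k).indicator p n
      = (if n = 1 then p 0 * a02 else 0) + (if n = k then p 0 * a01 else 0)
        + a12 * (Set.Ici 1).indicator p (n - 1) + a11 * (Set.Ici 1).indicator p (n - k)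
        + b12 * p (n + 1) + b11 * p (n + k) := by
  rcases Nat.lt_or_ge n k with hnk | hnk
  · have hlow : n - k = 0 := by omega
    rcases Nat.eq_or_lt_of_le hn with rfl | hn2
    · simp [Set.indicator_of_notMem, hlow, show 1 ≠ k by omega, show ¬ k ≤ 1 by omega,
        add_comm 1 k]
      linear_combination bal1
    · simp [Set.indicator_of_notMem, Set.indicator_of_mem, hlow, show n ≠ 1 by omega,
        hnk.ne, hnk.not_ge, show 1 ≤ n - 1 by omega]
      linear_combination balmid n (by omega) (by omega)
  · rcases Nat.eq_or_lt_of_le hnk with rfl | hkn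
    · simp [Set.indicator_of_mem, show k ≠ 1 by omega, show 1 ≤ k - 1 by omega]
      rw [two_mul] at balk
      linear_combination balk
    · simp [Set.indicator_of_mem, show n ≠ 1 by omega, hkn.ne', hnk, show 1 ≤ n - 1 by omega,
        show 1 ≤ n - k by omega]
      linear_combination baln n hkn

/-- `(Set.Ici 1).indicator p` and `(Set.Ici k).indicator p` are `Π` on the states allowing the
nonempty-queue arrivals and the `k`-unit departures; the truncated `N - j` is harmless because the
former vanishes at `0`. -/
theorem cut_flow_balance (hk : 0 < k)
    (bal0 : p 0 * (a01 + a02) = p 1 * b12 + p k * b11)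
    (hbal : ∀ n, 1 ≤ n → p n * (a11 + a12 + b12) + b11 * (Set.Ici k).indicator p n
      = (if n = 1 then p 0 * a02 else 0) + (if n = k then p 0 * a01 else 0)
        + a12 * (Set.Ici 1).indicator p (n - 1) + a11 * (Set.Ici 1).indicator p (n - k)
        + b12 * p (n + 1) + b11 * p (n + k)) (N : ℕ) :
    p 0 * ((if N = 0 then a02 else 0) + (if N < k then a01 else 0))
        + a12 * (Set.Ici 1).indicator p N + a11 * ∑ j ∈ range k, (Set.Ici 1).indicator p (N - j)
      = b12 * p (N + 1) + b11 * ∑ j ∈ range k, (Set.Ici k).indicator p (N + 1 + j) := by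
  induction N with
  | zero =>
    obtain ⟨m, rfl⟩ : ∃ m, k = m + 1 := ⟨k - 1, by omega⟩
    have hdown :
        ∑ j ∈ range (m + 1), (Set.Ici (m + 1)).indicator p (0 + 1 + j) = p (m + 1) := by
      rw [sum_range_succ, sum_eq_zero fun j hj => Set.indicator_of_notMem
        (by rw [mem_range] at hj; simp; omega) p]
      simp [add_comm 1 m]
    rw [hdown]
    simp only [↓reduceIte, zero_tsub, Set.indicator_of_notMem, Set.mem_Ici, nonpos_iff_eq_zero,
      one_ne_zero, not_false_eq_true, mul_zero, add_zero, sum_const_zero, zero_add, hk]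
    linear_combination bal0
  | succ N ih =>
    rw [sum_range_comp_succ_sub _ hk, sum_range_comp_succ_add]
    have hb := hbal (N + 1) (by omega)
    simp only [Nat.add_sub_cancel] at hb
    rw [Set.indicator_of_mem (show N + 1 ∈ Set.Ici 1 by simp),
      Set.indicator_of_mem (show N + 1 + k ∈ Set.Ici k by simp), if_neg N.succ_ne_zero]
    split_ifs at ih hb ⊢ <;> first | omega | linear_combination ih + hb

end BalanceEquations

section TotalFlows

variable {p : ℕ → ℝ} {s : ℝ}

theorem hasSum_upward_flow (k : ℕ) (a01 a02 a11 a12 : ℝ) (hp : HasSum p s) :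
    HasSum (fun N => p 0 * ((if N = 0 then a02 else 0) + (if N < k then a01 else 0))
        + a12 * (Set.Ici 1).indicator p N
        + a11 * ∑ j ∈ range k, (Set.Ici 1).indicator p (N - j))
      (p 0 * (a02 + k * a01) + a12 * (s - p 0) + a11 * (k * (s - p 0))) := by
  have hidle : HasSum (fun N => (if N = 0 then a02 else 0) + (if N < k then a01 else 0))
      (a02 + k * a01) := by
    convert (hasSum_ite_eq 0 a02).add (hasSum_sum_of_ne_finset_zero (s := range k)
      (f := fun N => if N < k then a01 else 0) fun N hN => if_neg (by simpa using hN)) using 1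
    simp [sum_ite_of_true fun N hN => mem_range.mp hN]
  have hbusy := hp.indicator_Ici 1
  have hwindow := hbusy.sum_range_comp_sub (by simp) k
  simp only [sum_range_one, nsmul_eq_mul] at hbusy hwindow
  exact ((hidle.mul_left _).add (hbusy.mul_left a12)).add (hwindow.mul_left a11)

theorem hasSum_downward_flow (k : ℕ) (b11 b12 : ℝ) (hp : HasSum p s) :
    HasSum (fun N => b12 * p (N + 1) + b11 * ∑ j ∈ range k, (Set.Ici k).indicator p (N + 1 + j))
      (b12 * (s - p 0) + b11 * (k * (s - ∑ i ∈ range k, p i))) := by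
  have hshift := (hasSum_nat_add_iff' 1).mpr hp
  have hwindow := (hp.indicator_Ici k).sum_range_comp_add fun i hi =>
    Set.indicator_of_notMem (by simpa using hi) p
  simp only [sum_range_one, nsmul_eq_mul] at hshift hwindow
  exact (hshift.mul_left b12).add (hwindow.mul_left b11)

end TotalFlows

theorem exact_chain_generating_function_identity_general
    (k : ℕ) (hk : 2 ≤ k)
    (a01 a02 a11 a12 b11 b12 : ℝ)
    (a0 a1 b1 : ℝ) (ha0 : a0 = a01 + a02) (ha1 : a1 = a11 + a12) (hb1 : b1 = b11 + b12)
    (p : ℕ → ℝ) (hsum : ∑' n, p n = 1)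
    (bal0 : p 0 * a0 = p 1 * b12 + p k * b11)
    (bal1 : p 1 * (a1 + b12) = p 0 * a02 + p 2 * b12 + p (k + 1) * b11)
    (balmid : ∀ n, 2 ≤ n → n ≤ k - 1 →
        p n * (a1 + b12) = p (n - 1) * a12 + p (n + 1) * b12 + p (n + k) * b11)
    (balk : p k * (a1 + b1)
        = p 0 * a01 + p (k - 1) * a12 + p (k + 1) * b12 + p (2 * k) * b11)
    (baln : ∀ n, k < n →
        p n * (a1 + b1)
          = p (n - k) * a11 + p (n - 1) * a12 + p (n + 1) * b12 + p (n + k) * b11) :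
    p 0 * (b12 + k * b11 - a12 - k * a11 + a02 + k * a01)
      = (b12 + k * b11 - a12 - k * a11)
        - k * b11 * ∑ n ∈ Finset.Icc 1 (k - 1), p n := by
  subst ha0 ha1 hb1
  have hp : HasSum p 1 := by
    by_cases hS : Summable p
    · exact hsum ▸ hS.hasSum
    · simp [tsum_eq_zero_of_not_summable hS] at hsum
  have hcut := cut_flow_balance (by omega) bal0 fun n hn =>
    balance_of_pos hk bal1 balmid balk baln hn
  have hflows := (hasSum_upward_flow k a01 a02 a11 a12 hp).unique
    (funext hcut ▸ hasSum_downward_flow k b11 b12 hp)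
  have hsplit : ∑ i ∈ range k, p i = p 0 + ∑ n ∈ Icc 1 (k - 1), p n := by
    rw [range_eq_Ico, sum_eq_sum_Ico_succ_bot (by omega), ← Ico_add_one_right_eq_Icc,
      Nat.sub_add_cancel (by omega)]
  rw [hsplit] at hflows
  linear_combination hflows

/-- Generating-function identity at `z = 1` for the exact BS relay queue with rates
`r₁ = k·r₂`: any nonnegative stationary distribution `(pₙ)` of total mass 1 satisfying the
balance equations satisfies
`Π₀·(b₁₂ + k b₁₁ − a₁₂ − k a₁₁ + a₀₂ + k a₀₁)
  = (b₁₂ + k b₁₁ − a₁₂ − k a₁₁) − k b₁₁ ∑_{n=1}^{k−1} Πₙ`. -/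
theorem exact_chain_generating_function_identity
    (k : ℕ) (hk : 2 ≤ k)
    (a01 a02 a11 a12 b11 b12 : ℝ)
    (ha01 : 0 ≤ a01) (ha02 : 0 ≤ a02) (ha11 : 0 ≤ a11) (ha12 : 0 ≤ a12)
    (hb11 : 0 ≤ b11) (hb12 : 0 ≤ b12)
    (a0 a1 b1 : ℝ) (ha0 : a0 = a01 + a02) (ha1 : a1 = a11 + a12) (hb1 : b1 = b11 + b12)
    (p : ℕ → ℝ) (hp : ∀ n, 0 ≤ p n) (hsum : ∑' n, p n = 1)
    (bal0 : p 0 * a0 = p 1 * b12 + p k * b11)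
    (bal1 : p 1 * (a1 + b12) = p 0 * a02 + p 2 * b12 + p (k + 1) * b11)
    (balmid : ∀ n, 2 ≤ n → n ≤ k - 1 →
        p n * (a1 + b12) = p (n - 1) * a12 + p (n + 1) * b12 + p (n + k) * b11)
    (balk : p k * (a1 + b1)
        = p 0 * a01 + p (k - 1) * a12 + p (k + 1) * b12 + p (2 * k) * b11)
    (baln : ∀ n, k < n →
        p n * (a1 + b1)
          = p (n - k) * a11 + p (n - 1) * a12 + p (n + 1) * b12 + p (n + k) * b11) :
    p 0 * (b12 + k * b11 - a12 - k * a11 + a02 + k * a01)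
      = (b12 + k * b11 - a12 - k * a11)
        - k * b11 * ∑ n ∈ Finset.Icc 1 (k - 1), p n :=
  exact_chain_generating_function_identity_general k hk a01 a02 a11 a12 b11 b12 a0 a1 b1 ha0 ha1 hb1
    p hsum bal0 bal1 balmid balk baln
end

section
/- Let k ≥ 1 be a natural number, r₂ > 0 and a₀₁, a₀₂, a₁₁, a₁₂, b₁₁, b₁₂, S nonnegative reals. Set A₀ = k·a₀₁ + a₀₂, A₁ = k·a₁₁ + a₁₂ and D = k·b₁₁ + b₁₂, and assume A₀ > 0, D > 0 and D − A₁ + A₀ > 0. Define Π̃₀ = (D − A₁)/(D − A₁ + A₀), Π₀ = Π̃₀ − k·b₁₁·S/(D − A₁ + A₀), μ⁰ = r₂·A₀, μ¹ = r₂·A₁, μ = Π₀·μ⁰ + (1 − Π₀)·μ¹ and μ̃ = Π̃₀·μ⁰ + (1 − Π̃₀)·μ¹. Then μ̃ = r₂·A₀·D/(D − A₁ + A₀) > 0 and the relative error (μ̃ − μ)/μ̃ equals k·b₁₁·S·(A₀ − A₁)/(D·A₀); in particular, if A₁ ≤ A₀ this relative error is nonnegative. -/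
/-- Relative error between the exact average service rate `μ` and its approximation `μ̃` in
the three-user model: `μ̃ = r₂ A₀ D/(D − A₁ + A₀) > 0` and
`(μ̃ − μ)/μ̃ = k b₁₁ S (A₀ − A₁)/(D A₀)`, nonnegative whenever `A₁ ≤ A₀`. -/
theorem relative_error_formula
    (k : ℕ) (hk : 1 ≤ k) (r2 : ℝ) (hr2 : 0 < r2)
    (a01 a02 a11 a12 b11 b12 S : ℝ)
    (ha01 : 0 ≤ a01) (ha02 : 0 ≤ a02) (ha11 : 0 ≤ a11) (ha12 : 0 ≤ a12)
    (hb11 : 0 ≤ b11) (hb12 : 0 ≤ b12) (hS : 0 ≤ S)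
    (A0 A1 D : ℝ)
    (hA0 : A0 = k * a01 + a02) (hA1 : A1 = k * a11 + a12) (hD : D = k * b11 + b12)
    (hA0pos : 0 < A0) (hDpos : 0 < D) (hden : 0 < D - A1 + A0)
    (Pit0 : ℝ) (hPit0 : Pit0 = (D - A1) / (D - A1 + A0))
    (Pi0 : ℝ) (hPi0 : Pi0 = Pit0 - k * b11 * S / (D - A1 + A0))
    (μ0 : ℝ) (hμ0 : μ0 = r2 * A0) (μ1 : ℝ) (hμ1 : μ1 = r2 * A1)
    (μ : ℝ) (hμdef : μ = Pi0 * μ0 + (1 - Pi0) * μ1)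
    (μt : ℝ) (hμtdef : μt = Pit0 * μ0 + (1 - Pit0) * μ1) :
    μt = r2 * A0 * D / (D - A1 + A0) ∧ 0 < μt
      ∧ (μt - μ) / μt = k * b11 * S * (A0 - A1) / (D * A0)
      ∧ (A1 ≤ A0 → 0 ≤ (μt - μ) / μt) := by

  have hden' : D - A1 + A0 ≠ 0 := ne_of_gt hden
  have hμt : μt = r2 * A0 * D / (D - A1 + A0) := by
    subst hμtdef hPit0 hμ0 hμ1; field_simp; ring
  have hpos : 0 < μt := by
    rw [hμt]
    positivity
  have hdiff : μt - μ = k * b11 * S / (D - A1 + A0) * (r2 * (A0 - A1)) := by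
    subst hμdef hμtdef hPi0 hμ0 hμ1; ring
  refine ⟨hμt, hpos, ?_, ?_⟩
  · rw [hdiff, hμt]
    field_simp
  · intro h
    rw [hdiff, hμt]
    have h1 : 0 ≤ k * b11 * S / (D - A1 + A0) * (r2 * (A0 - A1)) :=
      mul_nonneg (by positivity) (mul_nonneg hr2.le (sub_nonneg.2 h))
    exact div_nonneg h1 (by positivity)
end

section
/- Let p_s, p_d ∈ (0, 1] and let α ≥ 0 be a real number. Define a⁰ = p_s, a¹ = p_s·(α·p_d + 1 − p_d) and b = p_d·(1 − α·p_s), and let (Πₙ)_{n≥0} be a nonnegative real sequence satisfying Π₁·b = Π₀·a⁰ and Π_{n+1}·b = Πₙ·a¹ for all n ≥ 1, with Σ_{n≥0} Πₙ = 1. Then α < α* := (p_d − p_s + p_s·p_d)/(2·p_s·p_d), and the probability that the queue is empty equals Π₀ = (−2·α·p_s·p_d + p_d − p_s·(1 − p_d)) / (−2·α·p_s·p_d + p_d + p_s·p_d). -/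
/-- For the birth-and-death chain of a base-station queue `Q_{i,BS}` in the multi-user model
(arrival probabilities `a⁰ = p_s` from the empty state and `a¹ = p_s(α p_d + 1 − p_d)` from
nonempty states, departure probability `b = p_d(1 − α p_s)`), the existence of a nonnegative
stationary distribution of total mass 1 forces `α < α* = (p_d − p_s + p_s p_d)/(2 p_s p_d)`,
and the empty-queue probability equals
`Π₀ = (−2 α p_s p_d + p_d − p_s(1 − p_d))/(−2 α p_s p_d + p_d + p_s p_d)`. -/
theorem multi_user_empty_probability
    (ps pd : ℝ) (hps0 : 0 < ps) (hps1 : ps ≤ 1) (hpd0 : 0 < pd) (hpd1 : pd ≤ 1)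
    (α : ℝ) (hα : 0 ≤ α)
    (a0 a1 b : ℝ)
    (ha0 : a0 = ps) (ha1 : a1 = ps * (α * pd + 1 - pd)) (hb : b = pd * (1 - α * ps))
    (p : ℕ → ℝ) (hp : ∀ n, 0 ≤ p n)
    (bal0 : p 1 * b = p 0 * a0)
    (bal : ∀ n, 1 ≤ n → p (n + 1) * b = p n * a1)
    (hsum : ∑' n, p n = 1) :
    α < (pd - ps + ps * pd) / (2 * ps * pd)
      ∧ p 0 = (-(2 * α * ps * pd) + pd - ps * (1 - pd))
          / (-(2 * α * ps * pd) + pd + ps * pd) := by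
  have ha1nn : 0 ≤ a1 := by
    rw [ha1]
    have h1 : 0 ≤ α * pd + 1 - pd := by nlinarith [mul_nonneg hα hpd0.le]
    exact mul_nonneg hps0.le h1
  -- b must be positive
  have hbpos : 0 < b := by
    by_contra hble
    push_neg at hble
    have hall : ∀ n, p n = 0 := by
      rcases lt_or_eq_of_le hble with hlt | heq
      · -- b < 0
        have hp0 : p 0 = 0 := by
          have h1 : p 1 * b ≤ 0 := mul_nonpos_of_nonneg_of_nonpos (hp 1) hlt.le
          have h2 : p 0 * a0 ≤ 0 := by linarith [bal0]
          rw [ha0] at h2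
          nlinarith [hp 0]
        have hp1 : p 1 = 0 := by
          have h1 : p 1 * b = 0 := by rw [bal0, hp0, zero_mul]
          exact (mul_eq_zero.mp h1).resolve_right hlt.ne
        intro n
        induction n with
        | zero => exact hp0
        | succ k ih =>
          match k, ih with
          | 0, _ => exact hp1
          | (m+1), ih =>
            have h := bal (m+1) (Nat.le_add_left 1 m)
            rw [ih, zero_mul] at h
            exact (mul_eq_zero.mp h).resolve_right hlt.ne
      · -- b = 0
        have heq' : b = 0 := heq
        have hαps : α * ps = 1 := by
          rw [hb] at heq'
          have := mul_eq_zero.mp heq'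
          rcases this with h | h
          · exact absurd h hpd0.ne'
          · linarith
        have hα1 : 1 ≤ α := by nlinarith
        have ha1pos : 0 < a1 := by rw [ha1]; nlinarith
        have hp0 : p 0 = 0 := by
          have h1 : p 0 * a0 = 0 := by rw [← bal0, heq', mul_zero]
          rw [ha0] at h1
          exact (mul_eq_zero.mp h1).resolve_right hps0.ne'
        have hpn : ∀ n, 1 ≤ n → p n = 0 := by
          intro n hn
          have h := bal n hn
          rw [heq', mul_zero] at h
          exact (mul_eq_zero.mp h.symm).resolve_right ha1pos.ne'
        intro n
        cases n with
        | zero => exact hp0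
        | succ m => exact hpn (m+1) (Nat.le_add_left 1 m)
    have : (1:ℝ) = 0 := by
      rw [← hsum]
      simp [hall]
    norm_num at this
  -- summability
  have hS : Summable p := by
    by_contra h
    rw [tsum_eq_zero_of_not_summable h] at hsum
    norm_num at hsum
  -- p 0 > 0
  have hp0pos : 0 < p 0 := by
    rcases (hp 0).lt_or_eq with h | h
    · exact h
    · exfalso
      have hp0 : p 0 = 0 := h.symm
      have hp1 : p 1 = 0 := by
        have h1 : p 1 * b = 0 := by rw [bal0, hp0, zero_mul]
        exact (mul_eq_zero.mp h1).resolve_right hbpos.ne'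
      have hall : ∀ n, p n = 0 := by
        intro n
        induction n with
        | zero => exact hp0
        | succ k ih =>
          match k, ih with
          | 0, _ => exact hp1
          | (m+1), ih =>
            have h := bal (m+1) (Nat.le_add_left 1 m)
            rw [ih, zero_mul] at h
            exact (mul_eq_zero.mp h).resolve_right hbpos.ne'
      have : (1:ℝ) = 0 := by
        rw [← hsum]
        simp [hall]
      norm_num at this
  set r : ℝ := a1 / b with hr
  have hrnn : 0 ≤ r := div_nonneg ha1nn hbpos.le
  have hp1eq : p 1 = p 0 * a0 / b := by
    rw [eq_div_iff hbpos.ne']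
    exact bal0
  have hp1pos : 0 < p 1 := by
    rw [hp1eq, ha0]
    exact div_pos (mul_pos hp0pos hps0) hbpos
  have hgeom : ∀ n : ℕ, p (n + 1) = p 1 * r ^ n := by
    intro n
    induction n with
    | zero => simp
    | succ k ih =>
      have h := bal (k+1) (Nat.le_add_left 1 k)
      have h2 : p (k + 1 + 1) = p (k + 1) * a1 / b := by
        rw [eq_div_iff hbpos.ne']
        exact h
      rw [h2, ih, pow_succ, hr]
      ring
  -- r < 1
  have hrlt : r < 1 := by
    by_contra hge
    push_neg at hge
    have hlim := hS.tendsto_atTop_zero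
    have hev : ∀ᶠ n in Filter.atTop, p 1 ≤ p n := by
      rw [Filter.eventually_atTop]
      refine ⟨1, fun n hn => ?_⟩
      obtain ⟨m, rfl⟩ := Nat.exists_eq_add_of_le hn
      rw [Nat.add_comm, hgeom m]
      nlinarith [one_le_pow₀ hge (n := m)]
    have := ge_of_tendsto hlim hev
    linarith
  have hab : a1 < b := (div_lt_one hbpos).mp hrlt
  have hDA : 0 < b - a1 := by linarith
  constructor
  · rw [lt_div_iff₀ (by positivity)]
    rw [ha1, hb] at hab
    nlinarith
  · -- sum computation
    have hsum' : ∑' n, p (n + 1) = p 1 * (1 - r)⁻¹ := by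
      have : ∀ n : ℕ, p (n + 1) = p 1 * r ^ n := hgeom
      rw [tsum_congr this, tsum_mul_left, tsum_geometric_of_lt_one hrnn hrlt]
    have h0 : p 0 + p 1 * (1 - r)⁻¹ = 1 := by
      rw [← hsum', ← hsum]
      exact (Summable.tsum_eq_zero_add hS).symm
    have e1 : p 1 * (1 - r)⁻¹ = p 0 * a0 / (b - a1) := by
      rw [hp1eq, hr]
      rw [div_mul_eq_mul_div, eq_div_iff hDA.ne']
      field_simp
    rw [e1] at h0
    have key : p 0 * (b - a1 + a0) = b - a1 := by
      have h1 : p 0 * (b - a1) + p 0 * a0 = b - a1 := by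
        have := h0
        field_simp at this
        linarith
      linarith
    have hden : 0 < -(2 * α * ps * pd) + pd + ps * pd := by
      have : -(2 * α * ps * pd) + pd + ps * pd = b - a1 + a0 := by
        rw [ha0, ha1, hb]; ring
      rw [this]
      have : 0 < a0 := by rw [ha0]; exact hps0
      linarith
    rw [eq_div_iff hden.ne']
    rw [ha0, ha1, hb] at key
    linear_combination key
end

section
/- Let p_s, p_d ∈ (0, 1] and let α be a real number with 0 ≤ α ≤ α* := (p_d − p_s + p_s·p_d)/(2·p_s·p_d). Then the factor f(α) := 1 + p_s·p_d/(2·α·p_s·p_d − (1 + p_s)·p_d) satisfies 1 − p_d ≤ f(α) ≤ 1; in particular 0 ≤ f(α) ≤ 1 and (1 − p_s)·f(α) ≤ 1 − p_s. -/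
/-- Bounds on the scheduling factor contributed by a more-prioritized UE2UE communication:
for `p_s, p_d ∈ (0,1]` and `0 ≤ α ≤ α* = (p_d − p_s + p_s p_d)/(2 p_s p_d)`, the factor
`f(α) = 1 + p_s p_d/(2 α p_s p_d − (1 + p_s) p_d)` satisfies `1 − p_d ≤ f(α) ≤ 1`;
in particular `0 ≤ f(α) ≤ 1` and `(1 − p_s)·f(α) ≤ 1 − p_s`. -/
theorem scheduling_factor_bounds
    (ps pd : ℝ) (hps0 : 0 < ps) (hps1 : ps ≤ 1) (hpd0 : 0 < pd) (hpd1 : pd ≤ 1)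
    (α : ℝ) (hα0 : 0 ≤ α) (hα1 : α ≤ (pd - ps + ps * pd) / (2 * ps * pd))
    (f : ℝ) (hf : f = 1 + ps * pd / (2 * α * ps * pd - (1 + ps) * pd)) :
    1 - pd ≤ f ∧ f ≤ 1 ∧ 0 ≤ f ∧ (1 - ps) * f ≤ 1 - ps := by
  have hden : (0:ℝ) < 2 * ps * pd := by positivity
  have hα1' : α * (2 * ps * pd) ≤ pd - ps + ps * pd := (le_div_iff₀ hden).mp hα1
  have hD : 2 * α * ps * pd - (1 + ps) * pd ≤ -ps := by nlinarith
  have hDneg : 2 * α * ps * pd - (1 + ps) * pd < 0 := lt_of_le_of_lt hD (by linarith)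
  have h1 : ps * pd / (2 * α * ps * pd - (1 + ps) * pd) ≤ 0 :=
    div_nonpos_of_nonneg_of_nonpos (by positivity) (le_of_lt hDneg)
  have h2 : -pd ≤ ps * pd / (2 * α * ps * pd - (1 + ps) * pd) := by
    rw [le_div_iff_of_neg hDneg]
    nlinarith
  have hf1 : f ≤ 1 := by rw [hf]; linarith
  have hf2 : 1 - pd ≤ f := by rw [hf]; linarith
  refine ⟨hf2, hf1, by linarith, ?_⟩
  have : 0 ≤ 1 - ps := by linarith
  nlinarith
end

section
/- Let p_s, p_d ∈ (0, 1] with p_d − p_s + p_s·p_d ≥ 0, let λ ∈ [0, 1], set α* = (p_d − p_s + p_s·p_d)/(2·p_s·p_d) and γ = (1 + p_s)·p_d·(1 − λ)/((1 + p_s)·p_d − λ·(p_s·p_d + p_d − p_s)), and define F₁(x) = 1 + (1 − p_s)·p_d/((1 + p_s)·p_d − 2·x·p_s·p_d). Then F₁(λ·α*) = γ·F₁(0) + (1 − γ)·F₁(α*), where F₁(0) = 1 + (1 − p_s)/(1 + p_s) and F₁(α*) = 1 + (1 − p_s)·p_d/p_s. -/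
/-! With `D x = (1 + p_s) p_d − 2 x p_s p_d`, we have `F₁ = 1 + (1 − p_s) p_d / D` and `D` is
affine with `D 0 = (1 + p_s) p_d` and `D α* = p_s`, so `D (λ α*) = (1 − λ) D 0 + λ D α*`.
For any affine `D`, the reciprocal `1 / D` at a point of a segment is a convex combination
of its values at the endpoints, with weight `γ = (1 − λ) D 0 / D (λ α*)` on the first one. -/

theorem add_div_affine_combination {K : Type*} [Field K] (k c A B t : K)
    (hA : A ≠ 0) (hB : B ≠ 0) (hT : (1 - t) * A + t * B ≠ 0) :
    k + c / ((1 - t) * A + t * B)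
      = (1 - t) * A / ((1 - t) * A + t * B) * (k + c / A)
        + (1 - (1 - t) * A / ((1 - t) * A + t * B)) * (k + c / B) := by
  field_simp
  ring

theorem convex_combination_F1_general
    (ps pd : ℝ) (hps0 : 0 < ps) (hpd0 : 0 < pd)
    (lam : ℝ) (hlam0 : 0 ≤ lam) (hlam1 : lam ≤ 1)
    (αstar : ℝ) (hαstar : αstar = (pd - ps + ps * pd) / (2 * ps * pd))
    (γ : ℝ)
    (hγ : γ = (1 + ps) * pd * (1 - lam)
        / ((1 + ps) * pd - lam * (ps * pd + pd - ps)))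
    (F1 : ℝ → ℝ)
    (hF1 : ∀ x, F1 x = 1 + (1 - ps) * pd / ((1 + ps) * pd - 2 * x * ps * pd)) :
    F1 (lam * αstar) = γ * F1 0 + (1 - γ) * F1 αstar
      ∧ F1 0 = 1 + (1 - ps) / (1 + ps)
      ∧ F1 αstar = 1 + (1 - ps) * pd / ps := by
  have h2αstar : 2 * αstar * ps * pd = pd - ps + ps * pd := by
    rw [hαstar]
    field_simp
  set A := (1 + ps) * pd with hA_def
  have hA : 0 < A := by positivity
  have hT : 0 < (1 - lam) * A + lam * ps := by
    rcases hlam1.lt_or_eq with hlam1 | rfl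
    · linarith [mul_pos (sub_pos.2 hlam1) hA, mul_nonneg hlam0 hps0.le]
    · simpa using hps0
  have hF0 : F1 0 = 1 + (1 - ps) * pd / A := by
    rw [hF1]
    ring_nf
  have hFα : F1 αstar = 1 + (1 - ps) * pd / ps := by
    rw [hF1]
    congr 2
    linear_combination hA_def - h2αstar
  have hFlam : F1 (lam * αstar) = 1 + (1 - ps) * pd / ((1 - lam) * A + lam * ps) := by
    rw [hF1]
    congr 2
    linear_combination hA_def - lam * h2αstar
  have hγ' : γ = (1 - lam) * A / ((1 - lam) * A + lam * ps) := by
    rw [hγ]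
    congr 1 <;> ring
  refine ⟨?_, ?_, hFα⟩
  · rw [hFlam, hF0, hFα, hγ']
    exact add_div_affine_combination _ _ _ _ _ hA.ne' hps0.ne' hT.ne'
  · rw [hF0, mul_div_mul_right _ _ hpd0.ne']

/-- Convex-combination identity for the own-queue factor `F₁`: with
`F₁(x) = 1 + (1 − p_s) p_d / ((1 + p_s) p_d − 2 x p_s p_d)`,
`α* = (p_d − p_s + p_s p_d)/(2 p_s p_d)` and
`γ = (1 + p_s) p_d (1 − λ)/((1 + p_s) p_d − λ(p_s p_d + p_d − p_s))`, one has
`F₁(λ α*) = γ F₁(0) + (1 − γ) F₁(α*)`, where `F₁(0) = 1 + (1 − p_s)/(1 + p_s)` and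
`F₁(α*) = 1 + (1 − p_s) p_d / p_s`. -/
theorem convex_combination_F1
    (ps pd : ℝ) (hps0 : 0 < ps) (hps1 : ps ≤ 1) (hpd0 : 0 < pd) (hpd1 : pd ≤ 1)
    (hnum : 0 ≤ pd - ps + ps * pd)
    (lam : ℝ) (hlam0 : 0 ≤ lam) (hlam1 : lam ≤ 1)
    (αstar : ℝ) (hαstar : αstar = (pd - ps + ps * pd) / (2 * ps * pd))
    (γ : ℝ)
    (hγ : γ = (1 + ps) * pd * (1 - lam)
        / ((1 + ps) * pd - lam * (ps * pd + pd - ps)))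
    (F1 : ℝ → ℝ)
    (hF1 : ∀ x, F1 x = 1 + (1 - ps) * pd / ((1 + ps) * pd - 2 * x * ps * pd)) :
    F1 (lam * αstar) = γ * F1 0 + (1 - γ) * F1 αstar
      ∧ F1 0 = 1 + (1 - ps) / (1 + ps)
      ∧ F1 αstar = 1 + (1 - ps) * pd / ps :=
  convex_combination_F1_general ps pd hps0 hpd0 lam hlam0 hlam1 αstar hαstar γ hγ F1 hF1
end

section
/- Let p_s, p_d ∈ (0, 1] with p_d − p_s + p_s·p_d ≥ 0, let λ ∈ [0, 1], set α* = (p_d − p_s + p_s·p_d)/(2·p_s·p_d) and γ = (1 + p_s)·p_d·(1 − λ)/((1 + p_s)·p_d − λ·(p_s·p_d + p_d − p_s)), and define F₂(x) = 1 − p_s·p_d/((1 + p_s)·p_d − 2·x·p_s·p_d). Then F₂(λ·α*) = γ·F₂(0) + (1 − γ)·F₂(α*), where F₂(0) = 1 − p_s/(1 + p_s) and F₂(α*) = 1 − p_d. -/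
/-! With `A = (1 + p_s) p_d` and `B = 2 α* p_s p_d = p_s p_d + p_d − p_s`, `F₂(t α*)` is an affine
function of `1 / (A − t B)`, and the linear-fractional map `t ↦ 1 / (A − t B)` takes at `t` the
combination of its values at `t = 0` and `t = 1` with weight `γ = A (1 − t) / (A − t B)`. The
denominators are nonzero because `A − B = p_s` and `A − λ B = (1 − λ) A + λ p_s`. -/

theorem sub_div_sub_mul_eq_convex_comb {K : Type*} [Field K] (a c A B t : K) (hA : A ≠ 0)
    (hAB : A - B ≠ 0) (hAtB : A - t * B ≠ 0) :
    a - c / (A - t * B) = A * (1 - t) / (A - t * B) * (a - c / A)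
      + (1 - A * (1 - t) / (A - t * B)) * (a - c / (A - B)) := by
  field_simp
  ring

theorem convex_combination_F2_general
    (ps pd : ℝ) (hps0 : 0 < ps) (hpd0 : 0 < pd)
    (lam : ℝ) (hlam0 : 0 ≤ lam) (hlam1 : lam ≤ 1)
    (αstar : ℝ) (hαstar : αstar = (pd - ps + ps * pd) / (2 * ps * pd))
    (γ : ℝ)
    (hγ : γ = (1 + ps) * pd * (1 - lam)
        / ((1 + ps) * pd - lam * (ps * pd + pd - ps)))
    (F2 : ℝ → ℝ)
    (hF2 : ∀ x, F2 x = 1 - ps * pd / ((1 + ps) * pd - 2 * x * ps * pd)) :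
    F2 (lam * αstar) = γ * F2 0 + (1 - γ) * F2 αstar
      ∧ F2 0 = 1 - ps / (1 + ps)
      ∧ F2 αstar = 1 - pd := by
  have hB : 2 * αstar * ps * pd = ps * pd + pd - ps := by
    rw [hαstar]
    field_simp
    ring
  have hAB : (1 + ps) * pd - 2 * αstar * ps * pd = ps := by rw [hB]; ring
  have hAtB : 0 < (1 + ps) * pd - lam * (2 * αstar * ps * pd) := by
    rw [hB]
    nlinarith [mul_nonneg (sub_nonneg.2 hlam1) (mul_pos (by positivity : 0 < 1 + ps) hpd0).le]
  have hF2_zero : F2 0 = 1 - ps / (1 + ps) := by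
    rw [hF2, mul_zero, zero_mul, zero_mul, sub_zero, mul_div_mul_right _ _ hpd0.ne']
  have hF2_star : F2 αstar = 1 - pd := by
    rw [hF2, hAB, mul_div_cancel_left₀ _ hps0.ne']
  refine ⟨?_, hF2_zero, hF2_star⟩
  rw [hF2, hF2, hF2, hγ, ← hB, mul_zero, zero_mul, zero_mul, sub_zero,
    show 2 * (lam * αstar) * ps * pd = lam * (2 * αstar * ps * pd) by ring]
  exact sub_div_sub_mul_eq_convex_comb _ _ _ _ _ (by positivity) (by rw [hAB]; exact hps0.ne') hAtB.ne'

/-- Convex-combination identity for the cross-queue factor `F₂`: with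
`F₂(x) = 1 − p_s p_d / ((1 + p_s) p_d − 2 x p_s p_d)`,
`α* = (p_d − p_s + p_s p_d)/(2 p_s p_d)` and
`γ = (1 + p_s) p_d (1 − λ)/((1 + p_s) p_d − λ(p_s p_d + p_d − p_s))`, one has
`F₂(λ α*) = γ F₂(0) + (1 − γ) F₂(α*)`, where `F₂(0) = 1 − p_s/(1 + p_s)` and
`F₂(α*) = 1 − p_d`. -/
theorem convex_combination_F2
    (ps pd : ℝ) (hps0 : 0 < ps) (hps1 : ps ≤ 1) (hpd0 : 0 < pd) (hpd1 : pd ≤ 1)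
    (hnum : 0 ≤ pd - ps + ps * pd)
    (lam : ℝ) (hlam0 : 0 ≤ lam) (hlam1 : lam ≤ 1)
    (αstar : ℝ) (hαstar : αstar = (pd - ps + ps * pd) / (2 * ps * pd))
    (γ : ℝ)
    (hγ : γ = (1 + ps) * pd * (1 - lam)
        / ((1 + ps) * pd - lam * (ps * pd + pd - ps)))
    (F2 : ℝ → ℝ)
    (hF2 : ∀ x, F2 x = 1 - ps * pd / ((1 + ps) * pd - 2 * x * ps * pd)) :
    F2 (lam * αstar) = γ * F2 0 + (1 - γ) * F2 αstar
      ∧ F2 0 = 1 - ps / (1 + ps)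
      ∧ F2 αstar = 1 - pd :=
  convex_combination_F2_general ps pd hps0 hpd0 lam hlam0 hlam1 αstar hαstar γ hγ F2 hF2
end
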